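/- arXiv:2108.08316 — 3 statements merged into one kernel-verified Lean document; each statement's English description precedes it below -/
import Mathlib

section
/- Every hermiticity-preserving, trace-annihilating superoperator L on a finite-dimensional Hilbert space can be written in Lindblad form: there exist real γ_j and operators E_j such that L(ρ) = Σ_j γ_j (E_j ρ E_j† - ½{E_j† E_j, ρ}) for all ρ. -/
/-!
The Choi matrix of a hermiticity-preserving `L` is Hermitian, so its spectral decomposition
`Σ γ_m v_m v_mᴴ` yields, after reshaping each eigenvector `v_m` into a matrix `E_m`, a
pseudo-Kraus decomposition `L ρ = Σ γ_m E_m ρ E_mᴴ`. Trace annihilation then says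
`tr ((Σ γ_m E_mᴴ E_m) ρ) = 0` for every `ρ`, i.e. `Σ γ_m E_mᴴ E_m = 0`, so the anticommutator
terms of the Lindblad form add up to zero.
-/

open Matrix

namespace Matrix

variable {n : Type*} [DecidableEq n]

section CommSemiring

variable {R : Type*} [CommSemiring R]

/-- The Choi matrix of `L`, indexed so that `choiMatrix L (i, j) (k, l) = L (single i k 1) j l`. -/
def choiMatrix : (Matrix n n R →ₗ[R] Matrix n n R) →ₗ[R] Matrix (n × n) (n × n) R where
  toFun L p q := L (single p.1 q.1 1) p.2 q.2
  map_add' _ _ := rfl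
  map_smul' _ _ := rfl

theorem choiMatrix_apply (L : Matrix n n R →ₗ[R] Matrix n n R) (i j k l : n) :
    choiMatrix L (i, j) (k, l) = L (single i k 1) j l :=
  rfl

theorem choiMatrix_isHermitian [StarRing R] {L : Matrix n n R →ₗ[R] Matrix n n R}
    (hL : ∀ M, L Mᴴ = (L M)ᴴ) : (choiMatrix L).IsHermitian := by
  ext ⟨i, j⟩ ⟨k, l⟩
  rw [conjTranspose_apply, choiMatrix_apply, choiMatrix_apply, ← conjTranspose_apply,
    ← hL, conjTranspose_single, star_one]

variable [Fintype n]

theorem choiMatrix_injective :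
    Function.Injective (choiMatrix : (Matrix n n R →ₗ[R] Matrix n n R) → _) := by
  intro L L' h
  refine ext_linearMap R fun i k => LinearMap.ext_ring ?_
  ext j l
  exact congr_fun₂ h (i, j) (k, l)

variable [StarRing R]

def krausMap (K : Matrix n n R) : Matrix n n R →ₗ[R] Matrix n n R :=
  LinearMap.mulLeftRight R (K, Kᴴ)

theorem krausMap_apply (K ρ : Matrix n n R) : krausMap K ρ = K * ρ * Kᴴ :=
  rfl

theorem choiMatrix_krausMap (K : Matrix n n R) :
    choiMatrix (krausMap K) = vecMulVec (vec K) (star (vec K)) := by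
  ext ⟨i, j⟩ ⟨k, l⟩
  simp [choiMatrix_apply, krausMap_apply, vec, vecMulVec_apply, mul_apply, single_apply, ite_and]

theorem trace_krausMap (K ρ : Matrix n n R) : (krausMap K ρ).trace = (Kᴴ * K * ρ).trace := by
  rw [krausMap_apply, trace_mul_cycle, Matrix.mul_assoc]

theorem sum_smul_conjTranspose_mul_self_eq_zero {ι : Type*} [Fintype ι] (c : ι → R)
    (K : ι → Matrix n n R) (h : ∀ ρ, ((∑ j, c j • krausMap (K j)) ρ).trace = 0) :
    ∑ j, c j • ((K j)ᴴ * K j) = 0 := by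
  refine ext_iff_trace_mul_right.mpr fun ρ => ?_
  rw [Matrix.zero_mul, trace_zero, ← h ρ]
  simp [Finset.sum_mul, trace_sum, trace_krausMap]

end CommSemiring

section RCLike

variable {𝕜 : Type*} [RCLike 𝕜]

theorem IsHermitian.eq_sum_smul_vecMulVec {ι : Type*} [Fintype ι] [DecidableEq ι]
    {A : Matrix ι ι 𝕜} (hA : A.IsHermitian) :
    A = ∑ i, (hA.eigenvalues i : 𝕜) •
      vecMulVec ⇑(hA.eigenvectorBasis i) (star ⇑(hA.eigenvectorBasis i)) := by
  conv_lhs => rw [hA.spectral_theorem, Unitary.conjStarAlgAut_apply]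
  ext p q
  rw [mul_apply]
  simp only [mul_diagonal, sum_apply, smul_apply, vecMulVec_apply, Pi.star_apply,
    star_apply, eigenvectorUnitary_apply, Function.comp_apply, smul_eq_mul]
  exact Finset.sum_congr rfl fun m _ => by ring

theorem exists_eq_sum_smul_krausMap [Fintype n] {L : Matrix n n 𝕜 →ₗ[𝕜] Matrix n n 𝕜}
    (hL : (choiMatrix L).IsHermitian) :
    ∃ (r : ℕ) (γ : Fin r → ℝ) (K : Fin r → Matrix n n 𝕜),
      L = ∑ j, (γ j : 𝕜) • krausMap (K j) := by
  let e := Fintype.equivFin (n × n)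
  -- reshaped so that `vec (K m)` is the `m`-th eigenvector
  let K : n × n → Matrix n n 𝕜 := fun m => of fun j i => hL.eigenvectorBasis m (i, j)
  refine ⟨_, hL.eigenvalues ∘ e.symm, K ∘ e.symm, choiMatrix_injective ?_⟩
  simp only [Function.comp_apply]
  rw [Equiv.sum_comp e.symm (fun m => (hL.eigenvalues m : 𝕜) • krausMap (K m)), map_sum]
  conv_lhs => rw [hL.eq_sum_smul_vecMulVec]
  simp only [map_smul, choiMatrix_krausMap]
  rfl

end RCLike

end Matrix

/-- Every hermiticity-preserving, trace-annihilating superoperator on a finite-dimensional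
Hilbert space can be written in Lindblad form
`L(ρ) = Σ_j γ_j (E_j ρ E_j† − ½{E_j† E_j, ρ})` with real `γ_j`. -/
theorem hpta_lindblad_form {d : ℕ}
    (L : Matrix (Fin d) (Fin d) ℂ →ₗ[ℂ] Matrix (Fin d) (Fin d) ℂ)
    (hherm : ∀ M : Matrix (Fin d) (Fin d) ℂ, L Mᴴ = (L M)ᴴ)
    (htr : ∀ M : Matrix (Fin d) (Fin d) ℂ, (L M).trace = 0) :
    ∃ (n : ℕ) (γ : Fin n → ℝ) (E : Fin n → Matrix (Fin d) (Fin d) ℂ),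
      ∀ ρ : Matrix (Fin d) (Fin d) ℂ,
        L ρ = ∑ j, (γ j : ℂ) •
          (E j * ρ * (E j)ᴴ
            - (1 / 2 : ℂ) • ((E j)ᴴ * E j * ρ + ρ * ((E j)ᴴ * E j))) := by
  obtain ⟨n, γ, E, hL⟩ := exists_eq_sum_smul_krausMap (choiMatrix_isHermitian hherm)
  have hG : ∑ j, (γ j : ℂ) • ((E j)ᴴ * E j) = 0 :=
    sum_smul_conjTranspose_mul_self_eq_zero _ _ (hL ▸ htr)
  refine ⟨n, γ, E, fun ρ => ?_⟩
  calc L ρ = ∑ j, (γ j : ℂ) • (E j * ρ * (E j)ᴴ)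
        - (1 / 2 : ℂ) • ((∑ j, (γ j : ℂ) • ((E j)ᴴ * E j)) * ρ
          + ρ * ∑ j, (γ j : ℂ) • ((E j)ᴴ * E j)) := by
        rw [hG, Matrix.zero_mul, Matrix.mul_zero, add_zero, smul_zero, sub_zero, hL]
        simp [krausMap_apply]
    _ = _ := by
        simp only [Finset.sum_mul, Finset.mul_sum, Matrix.smul_mul, Matrix.mul_smul,
          ← Finset.sum_add_distrib, Finset.smul_sum, ← Finset.sum_sub_distrib]
        refine Finset.sum_congr rfl fun j _ => ?_
        module
end

section
/- Uniqueness of the traceless-jump-operator decomposition: suppose an HPTA superoperator L on a finite-dimensional Hilbert space admits two decompositions L(ρ) = -i[H₁, ρ] + D₁(ρ) = -i[H₂, ρ] + D₂(ρ), where each D_i is of Lindblad form D_i(ρ) = Σ_j c_{ij}(F_{ij} ρ F_{ij}† - ½{F_{ij}† F_{ij}, ρ}) with real coefficients c_{ij} and traceless operators F_{ij}, and H₁, H₂ are Hermitian. Then D₁ = D₂ as superoperators, and H₁ - H₂ is a real multiple of the identity. -/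
/-!
The linear map `Φ` on superoperators given by `traceContraction` sends `ρ ↦ A ρ B` to
`tr(B) A − tr(A) B`. It therefore annihilates every Lindblad dissipator with traceless jump
operators (the sandwich term gives `tr(F†) F − tr(F) F† = 0`, the anticommutator terms cancel),
while it sends `ρ ↦ [K, ρ]` to `2 (d K − tr(K) 1)`. Applying `Φ` to both decompositions gives
`d (H₁ − H₂) = tr(H₁ − H₂) 1`, so the Hermitian matrix `H₁ − H₂` is a real multiple of the
identity; its commutator vanishes and `D₁ = D₂` follows.
-/

namespace Matrix

theorem mul_single_mul_apply {l m m' o α : Type*} [Fintype m] [Fintype m'] [DecidableEq m]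
    [DecidableEq m'] [Semiring α] (A : Matrix l m α) (B : Matrix m' o α) (i : m) (j : m') (c : α)
    (a : l) (b : o) : (A * single i j c * B) a b = A a i * c * B j b := by
  rw [mul_apply, Finset.sum_eq_single j, mul_single_apply_same]
  · intro k _ hk
    rw [mul_single_apply_of_ne _ _ _ _ _ hk, zero_mul]
  · simp

variable {n R : Type*} [Fintype n] [DecidableEq n]

section CommRing

variable [CommRing R]

def traceContraction : (Matrix n n R → Matrix n n R) →ₗ[R] Matrix n n R where
  toFun L := of fun m p => ∑ q, L (single p q 1) m q - ∑ q, L (single q m 1) q p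
  map_add' L L' := by
    ext m p
    simp only [Pi.add_apply, add_apply, of_apply, Finset.sum_add_distrib]
    ring
  map_smul' r L := by
    ext m p
    simp only [Pi.smul_apply, smul_apply, of_apply, smul_eq_mul, ← Finset.mul_sum, RingHom.id_apply]
    ring

theorem traceContraction_mul_mul (A B : Matrix n n R) :
    traceContraction (fun ρ => A * ρ * B) = B.trace • A - A.trace • B := by
  ext m p
  simp [traceContraction, mul_single_mul_apply, trace, Finset.mul_sum, mul_comm]

theorem traceContraction_mul_left (A : Matrix n n R) :
    traceContraction (fun ρ => A * ρ) = (Fintype.card n : R) • A - A.trace • 1 := by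
  simpa [trace_one] using traceContraction_mul_mul A 1

theorem traceContraction_mul_right (A : Matrix n n R) :
    traceContraction (fun ρ => ρ * A) = A.trace • 1 - (Fintype.card n : R) • A := by
  simpa [trace_one] using traceContraction_mul_mul 1 A

theorem traceContraction_commutator (K : Matrix n n R) :
    traceContraction (fun ρ => K * ρ - ρ * K)
      = (2 : R) • ((Fintype.card n : R) • K - K.trace • 1) := by
  rw [show (fun ρ => K * ρ - ρ * K) = (fun ρ => K * ρ) - (fun ρ => ρ * K) from rfl, map_sub,
    traceContraction_mul_left, traceContraction_mul_right]
  module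

theorem traceContraction_anticommutator (K : Matrix n n R) :
    traceContraction (fun ρ => K * ρ + ρ * K) = 0 := by
  rw [show (fun ρ => K * ρ + ρ * K) = (fun ρ => K * ρ) + (fun ρ => ρ * K) from rfl, map_add,
    traceContraction_mul_left, traceContraction_mul_right]
  abel

end CommRing

def lindbladDissipator {𝕜 : Type*} [Field 𝕜] [StarRing 𝕜] (F : Matrix n n 𝕜) :
    Matrix n n 𝕜 → Matrix n n 𝕜 :=
  fun ρ => F * ρ * Fᴴ - (1 / 2 : 𝕜) • (Fᴴ * F * ρ + ρ * (Fᴴ * F))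

theorem traceContraction_lindbladDissipator {𝕜 : Type*} [Field 𝕜] [StarRing 𝕜]
    {F : Matrix n n 𝕜} (hF : F.trace = 0) :
    traceContraction (lindbladDissipator F) = 0 := by
  have hFH : Fᴴ.trace = 0 := by rw [trace_conjTranspose, hF, star_zero]
  change traceContraction ((fun ρ => F * ρ * Fᴴ)
    - (1 / 2 : 𝕜) • fun ρ => Fᴴ * F * ρ + ρ * (Fᴴ * F)) = 0
  rw [map_sub, map_smul, traceContraction_mul_mul, traceContraction_anticommutator, hF, hFH]
  simp

theorem traceContraction_eq_zero_of_lindblad {𝕜 ι : Type*} [Field 𝕜] [StarRing 𝕜] [Fintype ι]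
    (c : ι → 𝕜) {F : ι → Matrix n n 𝕜} (hF : ∀ j, (F j).trace = 0)
    {D : Matrix n n 𝕜 → Matrix n n 𝕜}
    (hD : ∀ ρ, D ρ = ∑ j, c j • (F j * ρ * (F j)ᴴ
        - (1 / 2 : 𝕜) • ((F j)ᴴ * F j * ρ + ρ * ((F j)ᴴ * F j)))) :
    traceContraction D = 0 := by
  have hD' : D = ∑ j, c j • lindbladDissipator (F j) := by
    ext1 ρ
    simp only [hD, Finset.sum_apply, Pi.smul_apply, lindbladDissipator]
  simp [hD', map_sum, traceContraction_lindbladDissipator, hF]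

theorem IsHermitian.exists_real_smul_one_of_card_smul_eq {𝕜 : Type*} [RCLike 𝕜]
    {K : Matrix n n 𝕜} (hK : K.IsHermitian) (h : (Fintype.card n : 𝕜) • K = K.trace • 1) :
    ∃ r : ℝ, K = (r : 𝕜) • 1 := by
  obtain ⟨t, ht⟩ : ∃ t : ℝ, K.trace = t := by
    rw [← RCLike.conj_eq_iff_real, ← RCLike.star_def, ← trace_conjTranspose, hK.eq]
  rcases isEmpty_or_nonempty n with hn | hn
  · exact ⟨0, Subsingleton.elim _ _⟩
  have hcard : (Fintype.card n : 𝕜) ≠ 0 := Nat.cast_ne_zero.mpr Fintype.card_ne_zero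
  refine ⟨t / Fintype.card n, smul_right_injective _ hcard ?_⟩
  simp only [h, ht, smul_smul]
  push_cast
  rw [mul_div_cancel₀ _ hcard]

end Matrix

open Matrix

/-- Uniqueness of the traceless-jump-operator decomposition: if an HPTA superoperator
admits two decompositions `L(ρ) = -i[H₁,ρ] + D₁(ρ) = -i[H₂,ρ] + D₂(ρ)` with `H₁, H₂`
Hermitian and `D₁, D₂` in Lindblad form with real coefficients and traceless jump
operators, then `D₁ = D₂` and `H₁ − H₂` is a real multiple of the identity. -/
theorem traceless_jump_decomposition_unique {d : ℕ}
    (H₁ H₂ : Matrix (Fin d) (Fin d) ℂ)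
    (hH₁ : H₁.IsHermitian) (hH₂ : H₂.IsHermitian)
    {n₁ n₂ : ℕ} (c₁ : Fin n₁ → ℝ) (F₁ : Fin n₁ → Matrix (Fin d) (Fin d) ℂ)
    (c₂ : Fin n₂ → ℝ) (F₂ : Fin n₂ → Matrix (Fin d) (Fin d) ℂ)
    (hF₁ : ∀ j, (F₁ j).trace = 0) (hF₂ : ∀ j, (F₂ j).trace = 0)
    (D₁ D₂ : Matrix (Fin d) (Fin d) ℂ → Matrix (Fin d) (Fin d) ℂ)
    (hD₁ : ∀ ρ, D₁ ρ = ∑ j, (c₁ j : ℂ) • (F₁ j * ρ * (F₁ j)ᴴ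
        - (1 / 2 : ℂ) • ((F₁ j)ᴴ * F₁ j * ρ + ρ * ((F₁ j)ᴴ * F₁ j))))
    (hD₂ : ∀ ρ, D₂ ρ = ∑ j, (c₂ j : ℂ) • (F₂ j * ρ * (F₂ j)ᴴ
        - (1 / 2 : ℂ) • ((F₂ j)ᴴ * F₂ j * ρ + ρ * ((F₂ j)ᴴ * F₂ j))))
    (heq : ∀ ρ : Matrix (Fin d) (Fin d) ℂ,
      (-Complex.I) • (H₁ * ρ - ρ * H₁) + D₁ ρ
        = (-Complex.I) • (H₂ * ρ - ρ * H₂) + D₂ ρ) :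
    (∀ ρ, D₁ ρ = D₂ ρ) ∧ ∃ r : ℝ, H₁ - H₂ = (r : ℂ) • (1 : Matrix (Fin d) (Fin d) ℂ) := by
  have hΦ : traceContraction ((-Complex.I) • (fun ρ => H₁ * ρ - ρ * H₁) + D₁)
      = traceContraction ((-Complex.I) • (fun ρ => H₂ * ρ - ρ * H₂) + D₂) :=
    congrArg _ (funext heq)
  rw [map_add, map_add, map_smul, map_smul, traceContraction_commutator,
    traceContraction_commutator, traceContraction_eq_zero_of_lindblad _ hF₁ hD₁,
    traceContraction_eq_zero_of_lindblad _ hF₂ hD₂, add_zero, add_zero] at hΦ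
  have hscalar : (Fintype.card (Fin d) : ℂ) • (H₁ - H₂) = (H₁ - H₂).trace • 1 := by
    have h2I : (-Complex.I * 2) ≠ 0 := by simp
    apply smul_right_injective _ h2I
    simp only [smul_smul] at hΦ
    simp only [trace_sub, sub_smul, smul_sub]
    linear_combination (norm := module) hΦ
  obtain ⟨r, hr⟩ := (hH₁.sub hH₂).exists_real_smul_one_of_card_smul_eq hscalar
  refine ⟨fun ρ => ?_, r, hr⟩
  have hcomm : H₁ * ρ - ρ * H₁ = H₂ * ρ - ρ * H₂ := by
    rw [sub_eq_iff_eq_add.mp hr]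
    simp only [add_mul, mul_add, smul_mul_assoc, mul_smul_comm, one_mul, mul_one]
    abel
  simpa [hcomm] using heq ρ
end

section
/- For an HPTA superoperator L on a d-dimensional Hilbert space, Lindblad's Hamiltonian H = (1/2i)∫dU (U† L(U) - L(U†)U) is Hermitian, and with pseudo-Kraus decomposition L(ρ) = Σ_j γ_j E_j ρ E_j†, it equals (1/(2id)) Σ_j γ_j (tr(E_j) E_j† - tr(E_j†) E_j) plus a real multiple of the identity. -/
open Matrix MeasureTheory

noncomputable instance (n : ℕ) : MeasurableSpace (Matrix.unitaryGroup (Fin n) ℂ) := borel _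

instance (n : ℕ) : BorelSpace (Matrix.unitaryGroup (Fin n) ℂ) := ⟨rfl⟩

instance (m : ℕ) : CompactSpace (Matrix.unitaryGroup (Fin m) ℂ) := by
  suffices h : IsCompact (Matrix.unitaryGroup (Fin m) ℂ : Set (Matrix (Fin m) (Fin m) ℂ)) from
    isCompact_iff_compactSpace.mp h
  have hb : IsCompact (Set.univ.pi fun _ : Fin m => Set.univ.pi fun _ : Fin m =>
      Metric.closedBall (0:ℂ) 1) :=
    isCompact_univ_pi fun _ => isCompact_univ_pi fun _ => isCompact_closedBall _ _
  refine hb.of_isClosed_subset ?_ ?_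
  · have : (Matrix.unitaryGroup (Fin m) ℂ : Set (Matrix (Fin m) (Fin m) ℂ)) =
        (fun M : Matrix (Fin m) (Fin m) ℂ => M * star M) ⁻¹' {1} := by
      ext M; simp [Matrix.mem_unitaryGroup_iff]
    rw [this]
    exact isClosed_singleton.preimage (continuous_id.matrix_mul
      (continuous_id.matrix_conjTranspose))
  · intro U hU
    simp only [Set.mem_pi, Set.mem_univ, forall_true_left, Metric.mem_closedBall,
      dist_zero_right]
    intro i j
    exact entry_norm_bound_of_unitary hU i j

section aux
variable {d : ℕ}

local notation "UG" => Matrix.unitaryGroup (Fin d) ℂ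
local notation "Mat" => Matrix (Fin d) (Fin d) ℂ

lemma contCoe : Continuous (fun U : UG => (U : Mat)) := continuous_subtype_val

lemma cont_entry (M : Mat) (i k : Fin d) :
    Continuous fun U : UG => (((U : Mat))ᴴ * M * (U : Mat)) i k :=
  ((contCoe.matrix_conjTranspose.matrix_mul continuous_const).matrix_mul contCoe).matrix_elem i k

def mulRightHomeo (V : UG) : UG ≃ₜ UG where
  toFun U := U * V
  invFun U := U * V⁻¹
  left_inv U := by simp [mul_assoc]
  right_inv U := by simp [mul_assoc]
  continuous_toFun := by
    apply Continuous.subtype_mk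
    exact contCoe.matrix_mul continuous_const
  continuous_invFun := by
    apply Continuous.subtype_mk
    exact contCoe.matrix_mul continuous_const

lemma integral_mulRight (μ : Measure UG) (V : UG)
    (hr : MeasurePreserving (fun U : UG => U * V) μ μ) (f : UG → ℂ) :
    ∫ U, f (U * V) ∂μ = ∫ U, f U ∂μ :=
  hr.integral_comp (mulRightHomeo V).measurableEmbedding f

lemma expand_entry (V X : Mat) (i k : Fin d) :
    (Vᴴ * X * V) i k = ∑ b, ∑ a, star (V a i) * X a b * V b k := by
  simp only [Matrix.mul_apply, Matrix.conjTranspose_apply, Finset.sum_mul]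

lemma integrable_entry (μ : Measure UG) [IsProbabilityMeasure μ] (M : Mat) (i k : Fin d) :
    Integrable (fun U : UG => (((U : Mat))ᴴ * M * (U : Mat)) i k) μ := by
  have h := (cont_entry M i k).continuousOn.integrableOn_compact (μ := μ) isCompact_univ
  rwa [integrableOn_univ] at h

lemma avg (hd : 0 < d) (μ : Measure UG) [IsProbabilityMeasure μ]
    (hright : ∀ V : UG, MeasurePreserving (fun U : UG => U * V) μ μ) (M : Mat) :
    (Matrix.of fun i k => ∫ U : UG, (((U : Mat))ᴴ * M * (U : Mat)) i k ∂μ)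
      = (M.trace / d) • (1 : Mat) := by
  set A : Mat := Matrix.of fun i k => ∫ U : UG, (((U : Mat))ᴴ * M * (U : Mat)) i k ∂μ with hA
  have hAapp : ∀ a b, A a b = ∫ U : UG, (((U : Mat))ᴴ * M * (U : Mat)) a b ∂μ := fun a b => rfl
  -- invariance under conjugation
  have hconj : ∀ V : UG, ((V : Mat))ᴴ * A * (V : Mat) = A := by
    intro V
    ext i k
    rw [expand_entry]
    calc ∑ b, ∑ a, star ((V : Mat) a i) * A a b * (V : Mat) b k
        = ∑ b, ∑ a, ∫ U : UG,
            star ((V : Mat) a i) * (((U : Mat))ᴴ * M * (U : Mat)) a b * (V : Mat) b k ∂μ := by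
          refine Finset.sum_congr rfl fun b _ => Finset.sum_congr rfl fun a _ => ?_
          rw [hAapp, ← integral_const_mul, ← integral_mul_const]
      _ = ∫ U : UG, ∑ b, ∑ a,
            star ((V : Mat) a i) * (((U : Mat))ᴴ * M * (U : Mat)) a b * (V : Mat) b k ∂μ := by
          rw [integral_finset_sum _ fun b _ => integrable_finset_sum _ fun a _ =>
            ((integrable_entry μ M a b).const_mul _).mul_const _]
          exact Finset.sum_congr rfl fun b _ => (integral_finset_sum _ fun a _ =>
            ((integrable_entry μ M a b).const_mul _).mul_const _).symm
      _ = ∫ U : UG, ((((U * V : UG) : Mat))ᴴ * M * ((U * V : UG) : Mat)) i k ∂μ := by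
          congr 1
          funext U
          rw [← expand_entry]
          simp [Matrix.conjTranspose_mul, Matrix.mul_assoc]
      _ = A i k := by
          rw [hAapp]
          exact integral_mulRight μ V (hright V)
            (fun U : UG => (((U : Mat))ᴴ * M * (U : Mat)) i k)
  -- off-diagonal entries vanish
  have hoff : ∀ i k, i ≠ k → A i k = 0 := by
    intro i k hik
    set v : Fin d → ℂ := fun a => if a = i then -1 else 1 with hv
    have hvu : Matrix.diagonal v ∈ Matrix.unitaryGroup (Fin d) ℂ := by
      rw [Matrix.mem_unitaryGroup_iff']
      have : star (Matrix.diagonal v) = Matrix.diagonal (star v) := by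
        simp [Matrix.star_eq_conjTranspose, Matrix.diagonal_conjTranspose]
      rw [this, Matrix.diagonal_mul_diagonal]
      ext a b
      by_cases hab : a = b
      · subst hab
        rw [Matrix.diagonal_apply_eq, Matrix.one_apply_eq]
        by_cases hai : a = i <;> simp [hv, hai]
      · rw [Matrix.diagonal_apply_ne _ hab, Matrix.one_apply_ne hab]
    have h := congrArg (fun X : Mat => X i k) (hconj ⟨Matrix.diagonal v, hvu⟩)
    simp only [Matrix.diagonal_conjTranspose] at h
    have h2 : (Matrix.diagonal (star v) * A * Matrix.diagonal v) i k
        = star (v i) * A i k * v k := by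
      rw [Matrix.mul_apply]
      simp [Matrix.diagonal_mul, Matrix.diagonal_apply, mul_ite, mul_zero,
        Finset.sum_ite_eq']
    rw [h2] at h
    have hvi : v i = -1 := by simp [hv]
    have hvk : v k = 1 := by simp [hv, (Ne.symm hik)]
    rw [hvi, hvk] at h
    simp only [star_neg, star_one, mul_one, neg_mul, one_mul] at h
    linear_combination (-(1:ℂ)/2) * h
  -- diagonal entries are all equal
  have hdiag : ∀ i k : Fin d, A i i = A k k := by
    intro i k
    set σ := Equiv.swap i k with hσ
    set P : Mat := Matrix.of fun a b => if a = σ b then 1 else 0 with hP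
    have hPapp : ∀ a b, P a b = if a = σ b then 1 else 0 := fun a b => rfl
    have hPu : P ∈ Matrix.unitaryGroup (Fin d) ℂ := by
      rw [Matrix.mem_unitaryGroup_iff']
      ext a b
      rw [Matrix.mul_apply]
      simp only [Matrix.star_eq_conjTranspose, Matrix.conjTranspose_apply, hPapp]
      simp only [apply_ite (star : ℂ → ℂ), star_one, star_zero, ite_mul, one_mul, zero_mul]
      rw [Finset.sum_ite_eq' Finset.univ (σ a)]
      simp only [Finset.mem_univ, if_true]
      by_cases hab : a = b
      · subst hab; simp [Matrix.one_apply_eq]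
      · rw [if_neg (fun hc => hab (σ.injective hc)), Matrix.one_apply_ne hab]
    have h := congrArg (fun X : Mat => X i i) (hconj ⟨P, hPu⟩)
    simp only at h
    rw [expand_entry] at h
    have hcalc : ∑ b, ∑ a, star (P a i) * A a b * P b i = A (σ i) (σ i) := by
      have : ∀ b a, star (P a i) * A a b * P b i
          = (if a = σ i then 1 else 0) * A a b * (if b = σ i then 1 else 0) := by
        intro b a
        simp [hPapp, apply_ite (starRingEnd ℂ)]
      simp only [this]
      rw [Finset.sum_eq_single (σ i)]
      · rw [Finset.sum_eq_single (σ i)]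
        · simp
        · intro c _ hc; simp [hc]
        · intro hc; exact absurd (Finset.mem_univ _) hc
      · intro c _ hc; simp [hc]
      · intro hc; exact absurd (Finset.mem_univ _) hc
    rw [hcalc] at h
    rw [hσ] at h
    simpa [Equiv.swap_apply_left] using h.symm
  -- trace of A equals trace of M
  have htrace : A.trace = M.trace := by
    rw [Matrix.trace]
    have : ∀ i, A i i = ∫ U : UG, (((U : Mat))ᴴ * M * (U : Mat)) i i ∂μ := fun i => rfl
    calc ∑ i, A.diag i = ∫ U : UG, ∑ i, (((U : Mat))ᴴ * M * (U : Mat)) i i ∂μ := by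
          rw [integral_finset_sum _ fun i _ => integrable_entry μ M i i]
          rfl
      _ = ∫ (_ : UG), M.trace ∂μ := by
          congr 1
          funext U
          have h1 : ∑ i, (((U : Mat))ᴴ * M * (U : Mat)) i i = (((U : Mat))ᴴ * M * (U : Mat)).trace := rfl
          rw [h1, Matrix.trace_mul_cycle, ← Matrix.star_eq_conjTranspose,
            (Matrix.mem_unitaryGroup_iff.mp U.2), Matrix.one_mul]
      _ = M.trace := by simp
  -- conclude
  have hdval : ∀ i, A i i = M.trace / d := by
    intro i
    have h1 : (d : ℂ) * A i i = M.trace := by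
      rw [← htrace, Matrix.trace]
      have : ∀ k, A.diag k = A i i := fun k => (hdiag i k).symm
      rw [Finset.sum_congr rfl fun k _ => this k]
      simp [Finset.sum_const, mul_comm]
    have hd0 : (d : ℂ) ≠ 0 := Nat.cast_ne_zero.mpr hd.ne'
    field_simp at h1 ⊢
    rw [mul_comm] at h1
    exact (mul_comm _ _).trans h1
  ext i k
  by_cases hik : i = k
  · subst hik
    simp [hdval i, Matrix.smul_apply, Matrix.one_apply_eq]
  · simp [hoff i k hik, Matrix.smul_apply, Matrix.one_apply_ne hik]
end aux

/-- For an HPTA superoperator `L(ρ) = Σ_j γ_j E_j ρ E_j†` on a `d`-dimensional Hilbert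
space, Lindblad's Hamiltonian `H = (1/2i)∫dU (U†L(U) − L(U†)U)` is Hermitian, and equals
`(1/(2id)) Σ_j γ_j (tr(E_j) E_j† − tr(E_j†) E_j)` up to a real multiple of the identity. -/
theorem lindblad_hamiltonian_eq_canonical {d n : ℕ} (hd : 0 < d)
    (μ : Measure (Matrix.unitaryGroup (Fin d) ℂ)) [IsProbabilityMeasure μ]
    (hleft : ∀ V : Matrix.unitaryGroup (Fin d) ℂ,
      MeasurePreserving (fun U => V * U) μ μ)
    (hright : ∀ V : Matrix.unitaryGroup (Fin d) ℂ,
      MeasurePreserving (fun U => U * V) μ μ)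
    (γ : Fin n → ℝ) (E : Fin n → Matrix (Fin d) (Fin d) ℂ)
    (hsum : ∑ j, (γ j : ℂ) • ((E j)ᴴ * E j) = 0)
    (L : Matrix (Fin d) (Fin d) ℂ → Matrix (Fin d) (Fin d) ℂ)
    (hLdef : ∀ M, L M = ∑ j, (γ j : ℂ) • (E j * M * (E j)ᴴ))
    (H : Matrix (Fin d) (Fin d) ℂ)
    (hHdef : H = Matrix.of fun i k =>
      ∫ U : Matrix.unitaryGroup (Fin d) ℂ,
        ((1 / (2 * Complex.I)) •
          (((U : Matrix (Fin d) (Fin d) ℂ))ᴴ * L (U : Matrix (Fin d) (Fin d) ℂ)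
            - L (((U : Matrix (Fin d) (Fin d) ℂ))ᴴ) *
                (U : Matrix (Fin d) (Fin d) ℂ))) i k ∂μ) :
    H.IsHermitian ∧
    ∃ r : ℝ, H = (1 / (2 * Complex.I * d)) •
        (∑ j, (γ j : ℂ) • ((E j).trace • (E j)ᴴ - ((E j)ᴴ).trace • E j))
      + (r : ℂ) • (1 : Matrix (Fin d) (Fin d) ℂ) := by
  have hd0 : (d : ℂ) ≠ 0 := Nat.cast_ne_zero.mpr hd.ne'
  -- entrywise formula for the integrand
  have hint : ∀ (U : Matrix.unitaryGroup (Fin d) ℂ) (i k : Fin d),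
      ((1 / (2 * Complex.I)) • (((U : Matrix (Fin d) (Fin d) ℂ))ᴴ *
          L (U : Matrix (Fin d) (Fin d) ℂ)
        - L (((U : Matrix (Fin d) (Fin d) ℂ))ᴴ) * (U : Matrix (Fin d) (Fin d) ℂ))) i k
      = (1 / (2 * Complex.I)) * ∑ j, (γ j : ℂ) *
          ((∑ b, (((U : Matrix (Fin d) (Fin d) ℂ))ᴴ * E j * (U : Matrix (Fin d) (Fin d) ℂ)) i b
              * (E j)ᴴ b k)
            - (∑ b, (E j) i b *
              (((U : Matrix (Fin d) (Fin d) ℂ))ᴴ * (E j)ᴴ * (U : Matrix (Fin d) (Fin d) ℂ)) b k)) := by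
    intro U i k
    rw [hLdef, hLdef, Finset.mul_sum, Finset.sum_mul]
    simp only [mul_smul_comm, smul_mul_assoc]
    rw [← Finset.sum_sub_distrib]
    simp only [Matrix.smul_apply, Matrix.sub_apply, Matrix.sum_apply, smul_eq_mul]
    rw [Finset.mul_sum, Finset.mul_sum]
    refine Finset.sum_congr rfl fun j _ => ?_
    congr 1
    rw [mul_sub]
    congr 1
    · congr 1
      have h3 : ((U : Matrix (Fin d) (Fin d) ℂ))ᴴ * (E j * (U : Matrix (Fin d) (Fin d) ℂ) * (E j)ᴴ)
          = (((U : Matrix (Fin d) (Fin d) ℂ))ᴴ * E j * (U : Matrix (Fin d) (Fin d) ℂ)) * (E j)ᴴ := by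
        simp only [Matrix.mul_assoc]
      rw [h3, Matrix.mul_apply]
    · congr 1
      have h3 : E j * ((U : Matrix (Fin d) (Fin d) ℂ))ᴴ * (E j)ᴴ * (U : Matrix (Fin d) (Fin d) ℂ)
          = E j * (((U : Matrix (Fin d) (Fin d) ℂ))ᴴ * (E j)ᴴ * (U : Matrix (Fin d) (Fin d) ℂ)) := by
        simp only [Matrix.mul_assoc]
      rw [h3, Matrix.mul_apply]
  have havgE : ∀ (M : Matrix (Fin d) (Fin d) ℂ) (a b : Fin d),
      (∫ U : Matrix.unitaryGroup (Fin d) ℂ,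
          (((U : Matrix (Fin d) (Fin d) ℂ))ᴴ * M * (U : Matrix (Fin d) (Fin d) ℂ)) a b ∂μ)
        = ((M.trace / d) • (1 : Matrix (Fin d) (Fin d) ℂ)) a b := by
    intro M a b
    have h := avg hd μ hright M
    exact congrArg (fun X : Matrix (Fin d) (Fin d) ℂ => X a b) h
  -- the closed form of H
  have hform : ∀ i k : Fin d, H i k
      = (1 / (2 * Complex.I)) * ∑ j, (γ j : ℂ) *
          (((E j).trace / d) * (E j)ᴴ i k - (((E j)ᴴ).trace / d) * (E j) i k) := by
    intro i k
    have h1 : H i k = ∫ U : Matrix.unitaryGroup (Fin d) ℂ,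
        ((1 / (2 * Complex.I)) • (((U : Matrix (Fin d) (Fin d) ℂ))ᴴ *
            L (U : Matrix (Fin d) (Fin d) ℂ)
          - L (((U : Matrix (Fin d) (Fin d) ℂ))ᴴ) * (U : Matrix (Fin d) (Fin d) ℂ))) i k ∂μ := by
      rw [hHdef]; rfl
    rw [h1, integral_congr_ae (Filter.Eventually.of_forall fun U => hint U i k)]
    have hi1 : ∀ j, Integrable (fun U : Matrix.unitaryGroup (Fin d) ℂ =>
        ∑ b, (((U : Matrix (Fin d) (Fin d) ℂ))ᴴ * E j * (U : Matrix (Fin d) (Fin d) ℂ)) i b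
          * (E j)ᴴ b k) μ :=
      fun j => integrable_finset_sum _ fun b _ => (integrable_entry μ (E j) i b).mul_const _
    have hi2 : ∀ j, Integrable (fun U : Matrix.unitaryGroup (Fin d) ℂ =>
        ∑ b, (E j) i b *
          (((U : Matrix (Fin d) (Fin d) ℂ))ᴴ * (E j)ᴴ * (U : Matrix (Fin d) (Fin d) ℂ)) b k) μ :=
      fun j => integrable_finset_sum _ fun b _ => (integrable_entry μ ((E j)ᴴ) b k).const_mul _
    have hi3 : ∀ j, Integrable (fun U : Matrix.unitaryGroup (Fin d) ℂ =>
        (γ j : ℂ) * ((∑ b, (((U : Matrix (Fin d) (Fin d) ℂ))ᴴ * E j * (U : Matrix (Fin d) (Fin d) ℂ)) i b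
              * (E j)ᴴ b k)
          - (∑ b, (E j) i b *
              (((U : Matrix (Fin d) (Fin d) ℂ))ᴴ * (E j)ᴴ * (U : Matrix (Fin d) (Fin d) ℂ)) b k))) μ :=
      fun j => by exact ((hi1 j).sub (hi2 j)).const_mul _
    rw [integral_const_mul, integral_finset_sum _ fun j _ => hi3 j]
    congr 1
    refine Finset.sum_congr rfl fun j _ => ?_
    rw [integral_const_mul, integral_sub (hi1 j) (hi2 j)]
    have e1 : (∫ U : Matrix.unitaryGroup (Fin d) ℂ,
        ∑ b, (((U : Matrix (Fin d) (Fin d) ℂ))ᴴ * E j * (U : Matrix (Fin d) (Fin d) ℂ)) i b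
          * (E j)ᴴ b k ∂μ) = ((E j).trace / d) * (E j)ᴴ i k := by
      rw [integral_finset_sum _ fun b _ => (integrable_entry μ (E j) i b).mul_const _]
      have h4 : ∀ b, (∫ U : Matrix.unitaryGroup (Fin d) ℂ,
          (((U : Matrix (Fin d) (Fin d) ℂ))ᴴ * E j * (U : Matrix (Fin d) (Fin d) ℂ)) i b
            * (E j)ᴴ b k ∂μ)
          = (((E j).trace / d) • (1 : Matrix (Fin d) (Fin d) ℂ)) i b * (E j)ᴴ b k := fun b => by
        rw [integral_mul_const, havgE]
      rw [Finset.sum_congr rfl fun b _ => h4 b]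
      simp only [Matrix.smul_apply, Matrix.one_apply, smul_eq_mul, mul_ite, mul_one,
        mul_zero, ite_mul, zero_mul]
      rw [Finset.sum_ite_eq]
      simp
    have e2 : (∫ U : Matrix.unitaryGroup (Fin d) ℂ,
        ∑ b, (E j) i b *
          (((U : Matrix (Fin d) (Fin d) ℂ))ᴴ * (E j)ᴴ * (U : Matrix (Fin d) (Fin d) ℂ)) b k ∂μ)
          = (((E j)ᴴ).trace / d) * (E j) i k := by
      rw [integral_finset_sum _ fun b _ => (integrable_entry μ ((E j)ᴴ) b k).const_mul _]
      have h4 : ∀ b, (∫ U : Matrix.unitaryGroup (Fin d) ℂ,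
          (E j) i b * (((U : Matrix (Fin d) (Fin d) ℂ))ᴴ * (E j)ᴴ * (U : Matrix (Fin d) (Fin d) ℂ)) b k ∂μ)
          = (E j) i b * ((((E j)ᴴ).trace / d) • (1 : Matrix (Fin d) (Fin d) ℂ)) b k := fun b => by
        rw [integral_const_mul, havgE]
      rw [Finset.sum_congr rfl fun b _ => h4 b]
      simp only [Matrix.smul_apply, Matrix.one_apply, smul_eq_mul, mul_ite, mul_one,
        mul_zero, ite_mul, zero_mul]
      rw [Finset.sum_ite_eq']
      simp [mul_comm]
    rw [e1, e2]
  constructor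
  · -- Hermitian
    refine Matrix.ext fun i k => ?_
    rw [Matrix.conjTranspose_apply, hform k i, hform i k]
    simp only [RCLike.star_def, _root_.map_mul, map_sum, map_sub, map_div₀, _root_.map_one,
      Complex.conj_ofReal, map_ofNat, Complex.conj_I, map_natCast]
    rw [Finset.mul_sum, Finset.mul_sum]
    refine Finset.sum_congr rfl fun j _ => ?_
    rw [Matrix.trace_conjTranspose, Matrix.conjTranspose_apply, Matrix.conjTranspose_apply]
    simp only [Matrix.star_eq_conjTranspose, RCLike.star_def, Complex.conj_conj]
    field_simp
    ring
  · -- canonical form with r = 0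
    refine ⟨0, ?_⟩
    refine Matrix.ext fun i k => ?_
    rw [hform i k]
    simp only [Complex.ofReal_zero, zero_smul, add_zero, Matrix.smul_apply, Matrix.sum_apply,
      Matrix.sub_apply, smul_eq_mul]
    rw [Finset.mul_sum, Finset.mul_sum]
    refine Finset.sum_congr rfl fun j _ => ?_
    field_simp
end
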